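/- The matched MSE converges to the prior variance in the large-noise limit: lim_{v → ∞} Ψ(v, v) = Var, where Var = Σ_{a∈O} p_a·|a − m|² and m = Σ_{a∈O} p_a·a. (Part of Lemma 5.) -/

import Mathlib

open MeasureTheory Filter Topology

noncomputable def wC (O : Finset ℂ) (p : ℂ → ℝ) (z : ℂ) (τ : ℝ) (a : ℂ) : ℝ :=
  p a * Real.exp (-(‖z - a‖) ^ 2 / τ) /
    ∑ a' ∈ O, p a' * Real.exp (-(‖z - a'‖) ^ 2 / τ)

noncomputable def Fc (O : Finset ℂ) (p : ℂ → ℝ) (z : ℂ) (τ : ℝ) : ℂ :=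
  ∑ a ∈ O, (wC O p z τ a : ℂ) * a

noncomputable def Gc (O : Finset ℂ) (p : ℂ → ℝ) (z : ℂ) (τ : ℝ) : ℝ :=
  ∑ a ∈ O, wC O p z τ a * (‖a - Fc O p z τ‖) ^ 2

noncomputable def gaussC : Measure ℂ :=
  volume.withDensity fun z => ENNReal.ofReal ((1 / Real.pi) * Real.exp (-(‖z‖) ^ 2))

noncomputable def PsiC (O : Finset ℂ) (p : ℂ → ℝ) (v g : ℝ) : ℝ :=
  ∑ a ∈ O, p a * ∫ z, (‖Fc O p (a + (Real.sqrt v : ℂ) * z) g - a‖) ^ 2 ∂gaussC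

noncomputable def PhiC (O : Finset ℂ) (p : ℂ → ℝ) (v g : ℝ) : ℝ :=
  ∑ a ∈ O, p a * ∫ z, Gc O p (a + (Real.sqrt v : ℂ) * z) g ∂gaussC

/-! ### Auxiliary lemmas -/

lemma aux_sqrt_tendsto_atTop : Tendsto Real.sqrt atTop atTop := by
  refine tendsto_atTop_atTop.2 fun b => ⟨(b ⊔ 0) ^ 2, fun a ha => ?_⟩
  have h1 : b ⊔ 0 ≤ Real.sqrt a := by
    have := Real.sqrt_le_sqrt ha
    rwa [Real.sqrt_sq (le_sup_right : (0:ℝ) ≤ b ⊔ 0)] at this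
  exact le_trans le_sup_left h1

section aux

variable {O : Finset ℂ} {p : ℂ → ℝ}

lemma denom_pos (hO : O.Nonempty) (hp : ∀ a ∈ O, 0 < p a) (z : ℂ) (τ : ℝ) :
    0 < ∑ a' ∈ O, p a' * Real.exp (-(‖z - a'‖) ^ 2 / τ) :=
  Finset.sum_pos (fun a ha => mul_pos (hp a ha) (Real.exp_pos _)) hO

lemma wC_nonneg (hO : O.Nonempty) (hp : ∀ a ∈ O, 0 < p a) (z : ℂ) (τ : ℝ) {a : ℂ}
    (ha : a ∈ O) : 0 ≤ wC O p z τ a :=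
  div_nonneg (mul_nonneg (hp a ha).le (Real.exp_pos _).le) (denom_pos hO hp z τ).le

lemma wC_sum (hO : O.Nonempty) (hp : ∀ a ∈ O, 0 < p a) (z : ℂ) (τ : ℝ) :
    ∑ a ∈ O, wC O p z τ a = 1 := by
  unfold wC
  rw [← Finset.sum_div, div_self (denom_pos hO hp z τ).ne']

lemma Fc_norm_le (hO : O.Nonempty) (hp : ∀ a ∈ O, 0 < p a) {R : ℝ}
    (hR : ∀ a ∈ O, ‖a‖ ≤ R) (z : ℂ) (τ : ℝ) : ‖Fc O p z τ‖ ≤ R := by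
  refine (norm_sum_le _ _).trans ?_
  have h : ∀ a ∈ O, ‖(wC O p z τ a : ℂ) * a‖ ≤ wC O p z τ a * R := by
    intro a ha
    rw [norm_mul, Complex.norm_real, Real.norm_of_nonneg (wC_nonneg hO hp z τ ha)]
    exact mul_le_mul_of_nonneg_left (hR a ha) (wC_nonneg hO hp z τ ha)
  refine (Finset.sum_le_sum h).trans ?_
  rw [← Finset.sum_mul, wC_sum hO hp, one_mul]

lemma Fc_continuous (hO : O.Nonempty) (hp : ∀ a ∈ O, 0 < p a) (τ : ℝ) :
    Continuous (fun z => Fc O p z τ) := by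
  unfold Fc wC
  refine continuous_finset_sum _ fun a _ => Continuous.mul
    (Complex.continuous_ofReal.comp ?_) continuous_const
  have hterm : ∀ a : ℂ,
      Continuous (fun z => p a * Real.exp (-(‖z - a‖) ^ 2 / τ)) := by
    intro a
    exact continuous_const.mul (Real.continuous_exp.comp
      ((((continuous_norm.comp (continuous_id.sub continuous_const)).pow 2).neg).div_const τ))
  exact (hterm a).div (continuous_finset_sum _ fun a' _ => hterm a')
    (fun z => (denom_pos hO hp z τ).ne')

lemma exp_term_tendsto (a0 a z : ℂ) :
    Tendsto (fun v : ℝ =>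
        Real.exp (-(‖a0 + (Real.sqrt v : ℂ) * z - a‖) ^ 2 / v))
      atTop (𝓝 (Real.exp (-(‖z‖) ^ 2))) := by
  have key : ∀ᶠ v : ℝ in atTop,
      -(‖a0 + (Real.sqrt v : ℂ) * z - a‖) ^ 2 / v
        = -(‖z‖) ^ 2 - Complex.normSq (a0 - a) / v
            - 2 * ((a0 - a) * (starRingEnd ℂ) z).re / Real.sqrt v := by
    filter_upwards [eventually_gt_atTop (0 : ℝ)] with v hv
    have hs : (0:ℝ) < Real.sqrt v := Real.sqrt_pos.2 hv
    have hv' : Real.sqrt v * Real.sqrt v = v := Real.mul_self_sqrt hv.le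
    have h1 : a0 + (Real.sqrt v : ℂ) * z - a = (a0 - a) + (Real.sqrt v : ℂ) * z := by ring
    rw [h1, Complex.sq_norm, Complex.normSq_add, Complex.sq_norm]
    have h2 : Complex.normSq ((Real.sqrt v : ℂ) * z) = v * Complex.normSq z := by
      rw [Complex.normSq_mul, Complex.normSq_ofReal, hv']
    have h3 : ((a0 - a) * (starRingEnd ℂ) ((Real.sqrt v : ℂ) * z)).re
        = Real.sqrt v * ((a0 - a) * (starRingEnd ℂ) z).re := by
      rw [map_mul, Complex.conj_ofReal]
      rw [show (a0 - a) * ((Real.sqrt v : ℂ) * (starRingEnd ℂ) z)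
          = (Real.sqrt v : ℂ) * ((a0 - a) * (starRingEnd ℂ) z) by ring]
      exact Complex.re_ofReal_mul _ _
    rw [h2, h3, ← hv']
    set s := Real.sqrt v
    set N := Complex.normSq (a0 - a)
    set Z := Complex.normSq z
    set r := ((a0 - a) * (starRingEnd ℂ) z).re
    field_simp
    rw [Real.sqrt_sq hs.le]
    ring
  have h1 : Tendsto (fun v : ℝ => -(‖z‖) ^ 2 - Complex.normSq (a0 - a) / v
      - 2 * ((a0 - a) * (starRingEnd ℂ) z).re / Real.sqrt v) atTop
      (𝓝 (-(‖z‖) ^ 2)) := by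
    have ha : Tendsto (fun v : ℝ => Complex.normSq (a0 - a) / v) atTop (𝓝 0) :=
      tendsto_const_nhds.div_atTop tendsto_id
    have hb : Tendsto (fun v : ℝ => 2 * ((a0 - a) * (starRingEnd ℂ) z).re / Real.sqrt v)
        atTop (𝓝 0) := tendsto_const_nhds.div_atTop aux_sqrt_tendsto_atTop
    have := ((tendsto_const_nhds (x := -(‖z‖)^2) (f := atTop)).sub ha).sub hb
    simpa using this
  exact (Real.continuous_exp.tendsto _).comp (Tendsto.congr' (key.mono fun v hv => hv.symm) h1)

lemma wC_tendsto (hO : O.Nonempty) (hp : ∀ a ∈ O, 0 < p a) (hpsum : ∑ a ∈ O, p a = 1)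
    (a0 z : ℂ) {a : ℂ} (ha : a ∈ O) :
    Tendsto (fun v : ℝ => wC O p (a0 + (Real.sqrt v : ℂ) * z) v a) atTop (𝓝 (p a)) := by
  have hnum : Tendsto (fun v : ℝ => p a *
      Real.exp (-(‖a0 + (Real.sqrt v : ℂ) * z - a‖) ^ 2 / v)) atTop
      (𝓝 (p a * Real.exp (-(‖z‖) ^ 2))) := (exp_term_tendsto a0 a z).const_mul _
  have hden : Tendsto (fun v : ℝ => ∑ a' ∈ O, p a' *
      Real.exp (-(‖a0 + (Real.sqrt v : ℂ) * z - a'‖) ^ 2 / v)) atTop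
      (𝓝 (∑ a' ∈ O, p a' * Real.exp (-(‖z‖) ^ 2))) :=
    tendsto_finset_sum _ fun a' _ => (exp_term_tendsto a0 a' z).const_mul _
  have hden' : ∑ a' ∈ O, p a' * Real.exp (-(‖z‖) ^ 2)
      = Real.exp (-(‖z‖) ^ 2) := by
    rw [← Finset.sum_mul, hpsum, one_mul]
  have hlim := hnum.div hden (by rw [hden']; exact (Real.exp_pos _).ne')
  have heq : p a * Real.exp (-(‖z‖) ^ 2)
      / (∑ a' ∈ O, p a' * Real.exp (-(‖z‖) ^ 2)) = p a := by
    rw [hden', mul_div_assoc, div_self (Real.exp_pos _).ne', mul_one]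
  rw [heq] at hlim
  exact hlim

lemma Fc_tendsto (hO : O.Nonempty) (hp : ∀ a ∈ O, 0 < p a) (hpsum : ∑ a ∈ O, p a = 1)
    (a0 z : ℂ) :
    Tendsto (fun v : ℝ => Fc O p (a0 + (Real.sqrt v : ℂ) * z) v) atTop
      (𝓝 (∑ a ∈ O, (p a : ℂ) * a)) := by
  unfold Fc
  refine tendsto_finset_sum _ fun a ha => ?_
  exact (((Complex.continuous_ofReal.tendsto _).comp
    (wC_tendsto hO hp hpsum a0 z ha)).mul_const a)

end aux

/-! ### The Gaussian measure is a probability measure -/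

lemma gauss_density_integrable :
    Integrable (fun z : ℂ => (1 / Real.pi) * Real.exp (-(‖z‖) ^ 2)) volume := by
  have hprod : Integrable (fun q : ℝ × ℝ =>
      ((1 / Real.pi) * Real.exp (-1 * q.1 ^ 2)) * Real.exp (-1 * q.2 ^ 2)) volume := by
    rw [MeasureTheory.Measure.volume_eq_prod]
    exact ((integrable_exp_neg_mul_sq one_pos).const_mul _).mul_prod
      (integrable_exp_neg_mul_sq one_pos)
  have h := (Complex.volume_preserving_equiv_real_prod.integrable_comp_emb
    Complex.measurableEquivRealProd.measurableEmbedding).2 hprod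
  refine h.congr (Filter.Eventually.of_forall fun z => ?_)
  show ((1 / Real.pi) * Real.exp (-1 * z.re ^ 2)) * Real.exp (-1 * z.im ^ 2)
      = (1 / Real.pi) * Real.exp (-(‖z‖) ^ 2)
  rw [Complex.sq_norm, Complex.normSq_apply, mul_assoc, ← Real.exp_add]
  ring_nf

lemma gauss_density_integral :
    ∫ z : ℂ, (1 / Real.pi) * Real.exp (-(‖z‖) ^ 2) = 1 := by
  have h := Complex.volume_preserving_equiv_real_prod.integral_comp'
    (f := Complex.measurableEquivRealProd)
    (g := fun q : ℝ × ℝ => ((1 / Real.pi) * Real.exp (-1 * q.1 ^ 2)) * Real.exp (-1 * q.2 ^ 2))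
  have heq : ∀ z : ℂ, ((1 / Real.pi) * Real.exp (-1 * z.re ^ 2)) * Real.exp (-1 * z.im ^ 2)
      = (1 / Real.pi) * Real.exp (-(‖z‖) ^ 2) := by
    intro z
    rw [Complex.sq_norm, Complex.normSq_apply, mul_assoc, ← Real.exp_add]
    ring_nf
  have h2 : ∫ q : ℝ × ℝ, ((1 / Real.pi) * Real.exp (-1 * q.1 ^ 2)) * Real.exp (-1 * q.2 ^ 2)
      = 1 := by
    rw [MeasureTheory.Measure.volume_eq_prod,
      integral_prod_mul (fun x : ℝ => (1 / Real.pi) * Real.exp (-1 * x ^ 2))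
        (fun y : ℝ => Real.exp (-1 * y ^ 2)),
      MeasureTheory.integral_const_mul, integral_gaussian]
    rw [div_one]
    rw [show (1 / Real.pi) * Real.sqrt Real.pi * Real.sqrt Real.pi
        = (Real.sqrt Real.pi * Real.sqrt Real.pi) / Real.pi by ring,
      Real.mul_self_sqrt Real.pi_pos.le, div_self Real.pi_pos.ne']
  calc ∫ z : ℂ, (1 / Real.pi) * Real.exp (-(‖z‖) ^ 2)
      = ∫ z : ℂ, ((1 / Real.pi) * Real.exp (-1 * z.re ^ 2)) * Real.exp (-1 * z.im ^ 2) := by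
        simp_rw [heq]
    _ = ∫ q : ℝ × ℝ, ((1 / Real.pi) * Real.exp (-1 * q.1 ^ 2)) * Real.exp (-1 * q.2 ^ 2) := h
    _ = 1 := h2

instance gaussC_probability : IsProbabilityMeasure gaussC := by
  constructor
  rw [gaussC, withDensity_apply _ MeasurableSet.univ, Measure.restrict_univ,
    ← ofReal_integral_eq_lintegral_ofReal gauss_density_integrable
      (Filter.Eventually.of_forall fun z =>
        mul_nonneg (by positivity) (Real.exp_pos _).le),
    gauss_density_integral, ENNReal.ofReal_one]

/-- Part of Lemma 5: the matched MSE converges to the prior variance in the large-noise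
limit, `Ψ(v, v) → Var` as `v → ∞`. -/
theorem lama_mse_large_noise_limit
    (O : Finset ℂ) (hO : O.Nonempty) (p : ℂ → ℝ)
    (hp : ∀ a ∈ O, 0 < p a) (hpsum : ∑ a ∈ O, p a = 1)
    (m : ℂ) (hm : m = ∑ a ∈ O, (p a : ℂ) * a)
    (Var : ℝ) (hVar : Var = ∑ a ∈ O, p a * ‖a - m‖ ^ 2) :
    Tendsto (fun v : ℝ => PsiC O p v v) atTop (𝓝 Var) := by
  obtain ⟨R, hR0, hR⟩ : ∃ R : ℝ, 0 ≤ R ∧ ∀ a ∈ O, ‖a‖ ≤ R := by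
    obtain ⟨R, hR⟩ := (O.image fun a => ‖a‖).exists_le
    exact ⟨R ⊔ 0, le_sup_right, fun a ha =>
      le_trans (hR _ (Finset.mem_image_of_mem _ ha)) le_sup_left⟩
  rw [hVar]
  unfold PsiC
  refine tendsto_finset_sum _ fun a0 ha0 => ?_
  refine Tendsto.const_mul _ ?_
  have hconst : ‖a0 - m‖ ^ 2 = ∫ _ : ℂ, ‖a0 - m‖ ^ 2 ∂gaussC := by
    rw [integral_const, probReal_univ, one_smul]
  rw [hconst]
  refine tendsto_integral_filter_of_dominated_convergence (fun _ => (2 * R) ^ 2)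
    ?_ ?_ (integrable_const _) ?_
  · refine Eventually.of_forall fun v => ?_
    exact ((continuous_norm.comp (((Fc_continuous hO hp v).comp
      (continuous_const.add (continuous_mul_left _))).sub continuous_const)).pow 2).aestronglyMeasurable
  · refine Eventually.of_forall fun v => Eventually.of_forall fun z => ?_
    rw [Real.norm_of_nonneg (by positivity)]
    have h1 : ‖Fc O p (a0 + (Real.sqrt v : ℂ) * z) v - a0‖ ≤ 2 * R := by
      calc ‖Fc O p (a0 + (Real.sqrt v : ℂ) * z) v - a0‖
          ≤ ‖Fc O p (a0 + (Real.sqrt v : ℂ) * z) v‖ + ‖a0‖ := norm_sub_le _ _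
        _ ≤ R + R := add_le_add (Fc_norm_le hO hp hR _ _) (hR a0 ha0)
        _ = 2 * R := by ring
    have h0 : (0:ℝ) ≤ ‖Fc O p (a0 + (Real.sqrt v : ℂ) * z) v - a0‖ :=
      norm_nonneg _
    exact pow_le_pow_left₀ h0 h1 2
  · refine Eventually.of_forall fun z => ?_
    have hF := Fc_tendsto hO hp hpsum a0 z
    rw [← hm] at hF
    have h2 : Tendsto (fun v : ℝ =>
        (‖Fc O p (a0 + (Real.sqrt v : ℂ) * z) v - a0‖) ^ 2) atTop
        (𝓝 ((‖m - a0‖) ^ 2)) :=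
      (((continuous_norm.tendsto _).comp (hF.sub_const a0)).pow 2)
    rwa [norm_sub_rev] at h2
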